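/- Let H be a Hilbert space, U a unitary operator on H, and P an invertible positive operator on H. If P U P⁻¹ is unitary, then P U P⁻¹ = U, i.e., P commutes with U. -/
import Mathlib

set_option synthInstance.maxHeartbeats 1000000
set_option maxHeartbeats 1000000

/-- If `P` is an invertible positive operator on a Hilbert space `H`, `U` is unitary,
and `P U P⁻¹` is unitary, then `P U P⁻¹ = U`, i.e. `P` commutes with `U`. -/
theorem stmt_0 {H : Type*} [NormedAddCommGroup H] [InnerProductSpace ℂ H]
    [CompleteSpace H]
    (U P Pinv : H →L[ℂ] H)
    (hU : U ∈ unitary (H →L[ℂ] H))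
    (hP : P.IsPositive)
    (hPinv₁ : P * Pinv = 1) (hPinv₂ : Pinv * P = 1)
    (hconj : P * U * Pinv ∈ unitary (H →L[ℂ] H)) :
    P * U * Pinv = U := by
  have hPsa : star P = P := hP.isSelfAdjoint
  have hPinvsa : star Pinv = Pinv := by
    have h1 : star Pinv * star P = 1 := by rw [← star_mul, hPinv₁, star_one]
    calc star Pinv = star Pinv * (P * Pinv) := by rw [hPinv₁, mul_one]
      _ = (star Pinv * star P) * Pinv := by rw [hPsa, mul_assoc]
      _ = Pinv := by rw [h1, one_mul]
  have hU1 : star U * U = 1 := hU.1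
  have hU2 : U * star U = 1 := hU.2
  -- From hconj : star (P U Pinv) * (P U Pinv) = 1
  have hc : Pinv * (star U * (P * (P * (U * Pinv)))) = 1 := by
    have := hconj.1
    rw [star_mul, star_mul, hPinvsa, hPsa] at this
    calc Pinv * (star U * (P * (P * (U * Pinv))))
        = Pinv * (star U * P) * (P * U * Pinv) := by simp only [mul_assoc]
      _ = 1 := this
  -- deduce star U * P * P * U = P * P
  have key : star U * (P * (P * U)) = P * P := by
    calc star U * (P * (P * U))
        = (P * Pinv) * (star U * (P * (P * (U * (Pinv * P))))) := by
          rw [hPinv₁, hPinv₂]; simp only [one_mul, mul_one]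
      _ = P * (Pinv * (star U * (P * (P * (U * Pinv))))) * P := by simp only [mul_assoc]
      _ = P * P := by rw [hc]; simp only [mul_one]
  -- Q := star U * P * U is nonneg with Q * Q = P * P
  set Q : H →L[ℂ] H := star U * P * U with hQdef
  have hQpos : (0 : H →L[ℂ] H) ≤ Q := by
    rw [ContinuousLinearMap.nonneg_iff_isPositive]
    have := hP.adjoint_conj U
    rw [← ContinuousLinearMap.star_eq_adjoint] at this
    exact this
  have hPpos : (0 : H →L[ℂ] H) ≤ P := by
    rw [ContinuousLinearMap.nonneg_iff_isPositive]; exact hP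
  have hQQ : Q * Q = P * P := by
    calc Q * Q = star U * (P * ((U * star U) * (P * U))) := by
          rw [hQdef]; simp only [mul_assoc]
      _ = star U * (P * (P * U)) := by rw [hU2, one_mul]
      _ = P * P := key
  have hQP : Q = P := by
    have h1 : CFC.sqrt (P * P) = Q := CFC.sqrt_unique hQQ hQpos
    have h2 : CFC.sqrt (P * P) = P := CFC.sqrt_mul_self P hPpos
    rw [← h1, h2]
  -- conclude
  have hcomm : P * U = U * P := by
    calc P * U = (U * star U) * (P * U) := by rw [hU2, one_mul]
      _ = U * Q := by rw [hQdef]; simp only [mul_assoc]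
      _ = U * P := by rw [hQP]
  rw [hcomm, mul_assoc, hPinv₁, mul_one]
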